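/- arXiv:1206.2669 — 2 statements merged into one kernel-verified Lean document; each statement's English description precedes it below -/
import Mathlib

section
/- Permutation-masking sufficiency: let X^n, Y^n be F^n-valued random variables, let Z^n be uniform on (F\{0})^n and π uniform on the permutations of {1,…,n}, with (Z^n, π) independent of (X^n, Y^n). Then the random sequence S := π(Z^n ⊗ (X^n ⊖ Y^n)) is conditionally independent of (X^n, Y^n) given the Hamming distance d_H(X^n, Y^n); equivalently I(S; X^n, Y^n | d_H(X^n, Y^n)) = 0. -/
/-!
Given `(X, Y) = (x, y)`, the mask `S = π(Z ⊗ (x - y))` (here `(z * w) ∘ σ`) takes the value `s`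
with probability proportional to the number `maskCount (x - y) s` of pairs `(z, σ)` producing
it. This count is unchanged when the coordinates of `w = x - y` are permuted or multiplied by
nonzero scalars, and any two vectors with the same number of nonzero entries are related by such
moves; so it depends on `(x, y)` only through `d_H(x, y)`. Hence the joint law of `(S, X, Y)`
factors as `f(d_H(x, y), s) · P(x, y)`, and the chain rule for entropy makes the four entropies
in the conditional mutual information cancel.
-/

def pmfOf {Ω α : Type*} [Fintype Ω] [DecidableEq α] (p : Ω → ℝ) (A : Ω → α) (a : α) : ℝ :=
  ∑ ω, if A ω = a then p ω else 0

noncomputable def entH {Ω α : Type*} [Fintype Ω] [Fintype α] [DecidableEq α]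
    (p : Ω → ℝ) (A : Ω → α) : ℝ :=
  ∑ a, Real.negMulLog (pmfOf p A a)

noncomputable def cmi {Ω α β γ : Type*} [Fintype Ω] [Fintype α] [Fintype β] [Fintype γ]
    [DecidableEq α] [DecidableEq β] [DecidableEq γ]
    (p : Ω → ℝ) (A : Ω → α) (X : Ω → β) (B : Ω → γ) : ℝ :=
  entH p (fun ω => (A ω, B ω)) + entH p (fun ω => (X ω, B ω))
    - entH p (fun ω => (A ω, X ω, B ω)) - entH p B

open Finset

section Information

variable {Ω α β γ : Type*} [Fintype Ω] [DecidableEq α] [DecidableEq β] [DecidableEq γ]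
  (p : Ω → ℝ)

lemma sum_pmfOf_prod_left [Fintype α] (U : Ω → α) (V : Ω → β) (b : β) :
    ∑ a, pmfOf p (fun ω => (U ω, V ω)) (a, b) = pmfOf p V b := by
  unfold pmfOf
  rw [Finset.sum_comm]
  refine Finset.sum_congr rfl fun ω _ => ?_
  simp [Prod.ext_iff, ite_and]

lemma sum_pmfOf_prod_mid [Fintype β] (U : Ω → α) (V : Ω → β) (W : Ω → γ) (a : α) (c : γ) :
    ∑ b, pmfOf p (fun ω => (U ω, V ω, W ω)) (a, b, c) = pmfOf p (fun ω => (U ω, W ω)) (a, c) := by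
  unfold pmfOf
  rw [Finset.sum_comm]
  refine Finset.sum_congr rfl fun ω _ => ?_
  simp [Prod.ext_iff, ite_and]

lemma entH_prod_eq_of_pmfOf_eq_mul [Fintype α] [Fintype β] (A : Ω → α) (V : Ω → β)
    (f : β → α → ℝ) (hf : ∀ a v, pmfOf p (fun ω => (A ω, V ω)) (a, v) = f v a * pmfOf p V v) :
    entH p (fun ω => (A ω, V ω))
      = ∑ v, pmfOf p V v * ∑ a, Real.negMulLog (f v a) + entH p V := by
  unfold entH
  rw [Fintype.sum_prod_type_right, ← Finset.sum_add_distrib]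
  refine Finset.sum_congr rfl fun v _ => ?_
  by_cases hv : pmfOf p V v = 0
  · simp [hf, hv]
  have hnorm : ∑ a, f v a = 1 := by
    have hmarg := sum_pmfOf_prod_left p A V v
    simp only [hf, ← Finset.sum_mul] at hmarg
    exact mul_right_cancel₀ hv (hmarg.trans (one_mul _).symm)
  simp only [hf, Real.negMulLog_mul, Finset.sum_add_distrib, ← Finset.mul_sum, ← Finset.sum_mul,
    hnorm, one_mul]

lemma cmi_eq_zero_of_pmfOf_eq_mul [Fintype α] [Fintype β] [Fintype γ]
    (A : Ω → α) (X : Ω → β) (B : Ω → γ) (f : γ → α → ℝ)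
    (hf : ∀ a x b, pmfOf p (fun ω => (A ω, X ω, B ω)) (a, x, b)
      = f b a * pmfOf p (fun ω => (X ω, B ω)) (x, b)) :
    cmi p A X B = 0 := by
  have hAB : ∀ a b, pmfOf p (fun ω => (A ω, B ω)) (a, b) = f b a * pmfOf p B b := by
    intro a b
    simp only [← sum_pmfOf_prod_mid p A X B, hf, ← Finset.mul_sum, sum_pmfOf_prod_left]
  have hAXB := entH_prod_eq_of_pmfOf_eq_mul p A (fun ω => (X ω, B ω)) (fun xb => f xb.2)
    fun a xb => hf a xb.1 xb.2
  have hXB : ∑ xb : β × γ, pmfOf p (fun ω => (X ω, B ω)) xb * ∑ a, Real.negMulLog (f xb.2 a)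
      = ∑ b, pmfOf p B b * ∑ a, Real.negMulLog (f b a) := by
    simp only [Fintype.sum_prod_type_right, ← Finset.sum_mul, sum_pmfOf_prod_left]
  unfold cmi
  rw [entH_prod_eq_of_pmfOf_eq_mul p A B f hAB, hAXB, hXB]
  ring

lemma pmfOf_prod_comp (X : Ω → β) (g : β → γ) (x : β) (b : γ) :
    pmfOf p (fun ω => (X ω, g (X ω))) (x, b) = if g x = b then pmfOf p X x else 0 := by
  unfold pmfOf
  split_ifs with h
  · refine Finset.sum_congr rfl fun ω _ => ?_
    by_cases hx : X ω = x <;> simp [hx, h]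
  · refine Finset.sum_eq_zero fun ω _ => ?_
    by_cases hx : X ω = x <;> simp [hx, h]

lemma pmfOf_prod_prod_comp (A : Ω → α) (X : Ω → β) (g : β → γ) (a : α) (x : β) (b : γ) :
    pmfOf p (fun ω => (A ω, X ω, g (X ω))) (a, x, b)
      = if g x = b then pmfOf p (fun ω => (A ω, X ω)) (a, x) else 0 := by
  unfold pmfOf
  split_ifs with h
  · refine Finset.sum_congr rfl fun ω _ => ?_
    by_cases hx : X ω = x <;> simp [hx, h]
  · refine Finset.sum_eq_zero fun ω _ => ?_
    by_cases hx : X ω = x <;> simp [hx, h]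

lemma cmi_comp_eq_zero [Fintype α] [Fintype β] [Fintype γ] (A : Ω → α) (X : Ω → β)
    (g : β → γ) (k : β → α → ℝ) (hk : k.FactorsThrough g)
    (hAX : ∀ a x, pmfOf p (fun ω => (A ω, X ω)) (a, x) = k x a * pmfOf p X x) :
    cmi p A X (fun ω => g (X ω)) = 0 := by
  refine cmi_eq_zero_of_pmfOf_eq_mul p A X _ (Function.extend g k 0) fun a x b => ?_
  rw [pmfOf_prod_prod_comp, pmfOf_prod_comp]
  split_ifs with h
  · rw [← h, hk.extend_apply, hAX]
  · rw [mul_zero]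

lemma pmfOf_prod_map [Fintype α] (W : Ω → α) (V : Ω → β) (h : α → β → γ) (c : γ) (v : β) :
    pmfOf p (fun ω => (h (W ω) (V ω), V ω)) (c, v)
      = ∑ w, if h w v = c then pmfOf p (fun ω => (W ω, V ω)) (w, v) else 0 := by
  unfold pmfOf
  simp only [Finset.ite_sum_zero]
  rw [Finset.sum_comm]
  refine Finset.sum_congr rfl fun ω _ => ?_
  rw [Finset.sum_eq_single (W ω) (by grind) (by simp)]
  by_cases hv : V ω = v <;> simp [hv]

lemma pmfOf_prod_map_eq_card_mul [Fintype α] (W : Ω → α) (V : Ω → β) (h : α → β → γ)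
    (S : Finset α) (c : ℝ)
    (hWV : ∀ w v, pmfOf p (fun ω => (W ω, V ω)) (w, v) = (if w ∈ S then c else 0) * pmfOf p V v)
    (a : γ) (v : β) :
    pmfOf p (fun ω => (h (W ω) (V ω), V ω)) (a, v) = #{w ∈ S | h w v = a} * c * pmfOf p V v := by
  rw [pmfOf_prod_map, Finset.card_filter, Nat.cast_sum, Finset.sum_mul, Finset.sum_mul,
    ← Finset.sum_subset (Finset.subset_univ S)]
  · refine Finset.sum_congr rfl fun w hw => ?_
    rw [hWV]
    by_cases ha : h w v = a <;> simp [hw, ha]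
  · intro w _ hw
    simp [hWV, hw]

end Information

lemma exists_perm_comp_eq_zero_iff {ι F : Type*} [Fintype ι] [Zero F] [DecidableEq F]
    (w w' : ι → F) (h : #{j | w j ≠ 0} = #{j | w' j ≠ 0}) :
    ∃ τ : Equiv.Perm ι, ∀ j, w (τ j) = 0 ↔ w' j = 0 := by
  have hcard : Fintype.card {j // w' j ≠ 0} = Fintype.card {j // w j ≠ 0} := by
    simp only [Fintype.card_subtype, h]
  let e := Fintype.equivOfCardEq hcard
  refine ⟨e.extendSubtype, fun j => ?_⟩
  by_cases hj : w' j = 0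
  · simpa [hj] using e.extendSubtype_not_mem j (not_not.mpr hj)
  · simpa [hj] using e.extendSubtype_mem j hj

section MaskCount

variable {ι F : Type*} [Fintype ι] [DecidableEq ι] [GroupWithZero F] [Fintype F] [DecidableEq F]

def maskCount (w s : ι → F) : ℕ :=
  #{zσ ∈ Fintype.piFinset (fun _ => {0}ᶜ) ×ˢ (univ : Finset (Equiv.Perm ι)) |
    (zσ.1 * w) ∘ zσ.2 = s}

lemma maskCount_comp_perm (w s : ι → F) (τ : Equiv.Perm ι) :
    maskCount (w ∘ τ) s = maskCount w s := by
  refine Finset.card_nbij' (fun zσ => (zσ.1 ∘ τ.symm, τ * zσ.2))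
    (fun zσ => (zσ.1 ∘ τ, τ⁻¹ * zσ.2)) ?_ ?_ ?_ ?_ <;> rintro ⟨z, σ⟩
  · simp +contextual [funext_iff]
  · simp +contextual [funext_iff]
  · simp [← mul_assoc, Function.comp_assoc]
  · simp [← mul_assoc, Function.comp_assoc]

lemma maskCount_mul_left (w s u : ι → F) (hu : ∀ j, u j ≠ 0) :
    maskCount (u * w) s = maskCount w s := by
  refine Finset.card_nbij' (fun zσ => (zσ.1 * u, zσ.2))
    (fun zσ => (zσ.1 * u⁻¹, zσ.2)) ?_ ?_ ?_ ?_ <;> rintro ⟨z, σ⟩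
  · simp +contextual [funext_iff, mul_assoc, hu]
  · simp +contextual [funext_iff, mul_assoc, hu]
  · simp [mul_assoc, funext_iff, hu]
  · simp [mul_assoc, funext_iff, hu]

lemma maskCount_eq_of_card_support_eq (w w' s : ι → F)
    (h : #{j | w j ≠ 0} = #{j | w' j ≠ 0}) :
    maskCount w s = maskCount w' s := by
  obtain ⟨τ, hτ⟩ := exists_perm_comp_eq_zero_iff w w' h
  set u : ι → F := fun j => if w (τ j) = 0 then 1 else w' j / w (τ j)
  have hu : ∀ j, u j ≠ 0 := fun j => by
    by_cases hj : w (τ j) = 0 <;> simp [u, hj, (hτ j).not.mp]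
  have hw' : w' = u * (w ∘ τ) := funext fun j => by
    by_cases hj : w (τ j) = 0 <;> simp [u, hj, (hτ j).mp]
  rw [hw', maskCount_mul_left _ _ _ hu, maskCount_comp_perm]

end MaskCount

lemma hammingDist_eq_of_finOfNat_eq {n : ℕ} {F : Type*} [DecidableEq F] {x y x' y' : Fin n → F}
    (h : Fin.ofNat (n + 1) (hammingDist x y) = Fin.ofNat (n + 1) (hammingDist x' y')) :
    hammingDist x y = hammingDist x' y' := by
  have hle : ∀ a b : Fin n → F, hammingDist a b < n + 1 := fun a b =>
    Nat.lt_succ_of_le (by simpa using hammingDist_le_card_fintype (x := a) (y := b))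
  simpa [Fin.ext_iff, Nat.mod_eq_of_lt (hle _ _)] using h

theorem permutation_masking_sufficiency_general {Ω F : Type*} [Fintype Ω] [Field F]
    [Fintype F] [DecidableEq F] (n : ℕ)
    (p : Ω → ℝ)
    (X Y Z : Ω → (Fin n → F)) (Pm : Ω → Equiv.Perm (Fin n))
    (hZunif : ∀ z : Fin n → F,
      pmfOf p Z z = if ∀ i, z i ≠ 0 then 1 / ((Fintype.card F : ℝ) - 1) ^ n else 0)
    (hPmunif : ∀ σ : Equiv.Perm (Fin n), pmfOf p Pm σ = 1 / (Nat.factorial n : ℝ))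
    (hZPmindep : ∀ (z : Fin n → F) (σ : Equiv.Perm (Fin n)),
      pmfOf p (fun ω => (Z ω, Pm ω)) (z, σ) = pmfOf p Z z * pmfOf p Pm σ)
    (hindep : ∀ (z : Fin n → F) (σ : Equiv.Perm (Fin n)) (x y : Fin n → F),
      pmfOf p (fun ω => ((Z ω, Pm ω), (X ω, Y ω))) ((z, σ), (x, y)) =
        pmfOf p (fun ω => (Z ω, Pm ω)) (z, σ) * pmfOf p (fun ω => (X ω, Y ω)) (x, y)) :
    cmi p
      (fun ω => fun i => Z ω (Pm ω i) * (X ω (Pm ω i) - Y ω (Pm ω i)))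
      (fun ω => (X ω, Y ω))
      (fun ω => Fin.ofNat (n+1) (hammingDist (X ω) (Y ω))) = 0 := by
  set c : ℝ := 1 / ((Fintype.card F : ℝ) - 1) ^ n * (1 / (Nat.factorial n : ℝ))
  have hnoise : ∀ zσ xy, pmfOf p (fun ω => ((Z ω, Pm ω), (X ω, Y ω))) (zσ, xy)
      = (if zσ ∈ Fintype.piFinset (fun _ => {0}ᶜ) ×ˢ univ then c else 0)
        * pmfOf p (fun ω => (X ω, Y ω)) xy := by
    rintro ⟨z, σ⟩ ⟨x, y⟩
    rw [hindep, hZPmindep, hZunif, hPmunif]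
    simp only [Finset.mem_product, Fintype.mem_piFinset, Finset.mem_compl, Finset.mem_singleton,
      Finset.mem_univ, and_true]
    split_ifs <;> ring
  refine cmi_comp_eq_zero p (fun ω => (Z ω * (X ω - Y ω)) ∘ Pm ω) (fun ω => (X ω, Y ω))
    (fun xy => Fin.ofNat (n + 1) (hammingDist xy.1 xy.2))
    (fun xy s => maskCount (xy.1 - xy.2) s * c) ?_ fun s xy => ?_
  · rintro ⟨x, y⟩ ⟨x', y'⟩ h
    have hd := hammingDist_eq_of_finOfNat_eq h
    funext s
    dsimp only
    rw [maskCount_eq_of_card_support_eq _ (x' - y')]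
    simpa [hammingDist, sub_ne_zero] using hd
  · exact pmfOf_prod_map_eq_card_mul p (fun ω => (Z ω, Pm ω))
      (fun ω => (X ω, Y ω)) (fun zσ xy => (zσ.1 * (xy.1 - xy.2)) ∘ zσ.2) _ c hnoise s xy

/-- Permutation-masking sufficiency: with `Z^n` uniform on
`(F\{0})^n`, `π` uniform on permutations, `Z^n` and `π` independent of each
other and jointly independent of `(X^n, Y^n)`, the sequence
`S = π(Z^n ⊗ (X^n ⊖ Y^n))` satisfies `I(S ; X^n, Y^n | d_H(X^n, Y^n)) = 0`. -/
theorem permutation_masking_sufficiency {Ω F : Type*} [Fintype Ω] [Field F]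
    [Fintype F] [DecidableEq F] (n : ℕ)
    (p : Ω → ℝ) (hp0 : ∀ ω, 0 ≤ p ω) (hp1 : ∑ ω, p ω = 1)
    (X Y Z : Ω → (Fin n → F)) (Pm : Ω → Equiv.Perm (Fin n))
    (hZunif : ∀ z : Fin n → F,
      pmfOf p Z z = if ∀ i, z i ≠ 0 then 1 / ((Fintype.card F : ℝ) - 1) ^ n else 0)
    (hPmunif : ∀ σ : Equiv.Perm (Fin n), pmfOf p Pm σ = 1 / (Nat.factorial n : ℝ))
    (hZPmindep : ∀ (z : Fin n → F) (σ : Equiv.Perm (Fin n)),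
      pmfOf p (fun ω => (Z ω, Pm ω)) (z, σ) = pmfOf p Z z * pmfOf p Pm σ)
    (hindep : ∀ (z : Fin n → F) (σ : Equiv.Perm (Fin n)) (x y : Fin n → F),
      pmfOf p (fun ω => ((Z ω, Pm ω), (X ω, Y ω))) ((z, σ), (x, y)) =
        pmfOf p (fun ω => (Z ω, Pm ω)) (z, σ) * pmfOf p (fun ω => (X ω, Y ω)) (x, y)) :
    cmi p
      (fun ω => fun i => Z ω (Pm ω i) * (X ω (Pm ω i) - Y ω (Pm ω i)))
      (fun ω => (X ω, Y ω))
      (fun ω => Fin.ofNat (n+1) (hammingDist (X ω) (Y ω))) = 0 :=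
  permutation_masking_sufficiency_general n p X Y Z Pm hZunif hPmunif hZPmindep hindep
end

section
/- Share independence in HamDist: with R^n uniform on F^n independent of (X^n, Y^n, Z^n, π), the share B^n = π(Z^n ⊗ (R^n ⊖ Y^n)) is conditionally independent of (X^n, Y^n) given S = A^n ⊕ B^n = π(Z^n ⊗ (X^n ⊖ Y^n)); formally H(X^n,Y^n | B^n, S) = H(X^n,Y^n | S). -/
/-- Conditional entropy `H(A | B)`. -/
noncomputable def condEntH {Ω α β : Type*} [Fintype Ω] [Fintype α] [Fintype β]
    [DecidableEq α] [DecidableEq β] (p : Ω → ℝ) (A : Ω → α) (B : Ω → β) : ℝ :=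
  entH p (fun ω => (A ω, B ω)) - entH p B


/-!
Fix the side information `T = (Z, π, X, Y)`. Whenever `Z` has no zero coordinate, the map
`r ↦ π(Z ⊗ (r ⊖ Y))` is a bijection of `F^n`; since `R` is uniform on `F^n` and independent of
`T`, the share `B` is then uniform on `F^n` and independent of every function of `T`, in
particular of `S` and of `((X, Y), S)`. Hence adding `B` to either of them raises the entropy
by the same amount `n log |F|`, and the two increments cancel in the conditional entropies.
-/

open Function

section Pmf

variable {Ω α β : Type*} [Fintype Ω] (p : Ω → ℝ)

lemma pmfOf_comp_eq_sum [Fintype α] [DecidableEq α] [DecidableEq β]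
    (A : Ω → α) (G : α → β) (b : β) :
    pmfOf p (fun ω => G (A ω)) b = ∑ a, if G a = b then pmfOf p A a else 0 := by
  unfold pmfOf
  calc _ = ∑ a, ∑ ω, if A ω = a then (if G a = b then p ω else 0) else 0 := by
        rw [Finset.sum_comm]; simp
    _ = _ := by congr! with a; split_ifs <;> simp

lemma sum_pmfOf [Fintype α] [DecidableEq α] (A : Ω → α) : ∑ a, pmfOf p A a = ∑ ω, p ω := by
  unfold pmfOf
  rw [Finset.sum_comm]
  simp

lemma sum_pmfOf_pair_left [Fintype α] [DecidableEq α] [DecidableEq β]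
    (A : Ω → α) (B : Ω → β) (b : β) :
    ∑ a, pmfOf p (fun ω => (A ω, B ω)) (a, b) = pmfOf p B b := by
  unfold pmfOf
  rw [Finset.sum_comm]
  simp [Prod.ext_iff, ite_and]

lemma pmfOf_comp_equiv [DecidableEq α] [DecidableEq β] (e : α ≃ β) (A : Ω → α) (a : α) :
    pmfOf p (fun ω => e (A ω)) (e a) = pmfOf p A a := by
  simp [pmfOf]

lemma entH_comp_equiv [Fintype α] [Fintype β] [DecidableEq α] [DecidableEq β]
    (e : α ≃ β) (A : Ω → α) : entH p (fun ω => e (A ω)) = entH p A := by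
  unfold entH
  rw [← e.sum_comp]
  simp only [pmfOf_comp_equiv]

end Pmf

section UniformIndep

variable {Ω β γ τ : Type*} [Fintype Ω] (p : Ω → ℝ)

def UniformIndep [Fintype β] [DecidableEq β] [DecidableEq γ] (B : Ω → β) (S : Ω → γ) : Prop :=
  ∀ b s, pmfOf p (fun ω => (B ω, S ω)) (b, s) = pmfOf p S s / Fintype.card β

variable [Fintype β] [DecidableEq β] [DecidableEq γ] {B : Ω → β} {S : Ω → γ}

lemma pmfOf_eq_of_pmfOf_pair_eq [Nonempty β] (K : γ → ℝ)
    (h : ∀ b s, pmfOf p (fun ω => (B ω, S ω)) (b, s) = K s / Fintype.card β) (s : γ) :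
    pmfOf p S s = K s := by
  have hcard : (Fintype.card β : ℝ) ≠ 0 := Nat.cast_ne_zero.mpr Fintype.card_ne_zero
  rw [← sum_pmfOf_pair_left p B S s]
  simp only [h, Finset.sum_const, Finset.card_univ, nsmul_eq_mul]
  field_simp

lemma uniformIndep_of_pmfOf_pair_eq [Nonempty β] (K : γ → ℝ)
    (h : ∀ b s, pmfOf p (fun ω => (B ω, S ω)) (b, s) = K s / Fintype.card β) :
    UniformIndep p B S := fun b s => by
  rw [h, pmfOf_eq_of_pmfOf_pair_eq p K h]

lemma UniformIndep.comp_bijective [Fintype τ] [DecidableEq τ] {T : Ω → τ}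
    (h : UniformIndep p B T) (f : τ → β → β) (hf : ∀ t, pmfOf p T t ≠ 0 → Bijective (f t))
    (C : τ → γ) : UniformIndep p (fun ω => f (T ω) (B ω)) (fun ω => C (T ω)) := by
  intro b c
  have hfiber : ∀ t, (∑ r, if f t r = b then pmfOf p T t / Fintype.card β else 0)
      = pmfOf p T t / Fintype.card β := by
    intro t
    by_cases ht : pmfOf p T t = 0
    · simp [ht]
    · have hsol : ∀ r, f t r = b ↔ r = (Equiv.ofBijective _ (hf t ht)).symm b :=
        fun r => (Equiv.ofBijective _ (hf t ht)).eq_symm_apply.symm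
      simp [hsol]
  calc pmfOf p (fun ω => (f (T ω) (B ω), C (T ω))) (b, c)
      = ∑ x : β × τ, if (f x.2 x.1, C x.2) = (b, c)
          then pmfOf p (fun ω => (B ω, T ω)) x else 0 :=
        pmfOf_comp_eq_sum p (fun ω => (B ω, T ω)) (fun x => (f x.2 x.1, C x.2)) (b, c)
    _ = ∑ t, if C t = c then ∑ r, (if f t r = b then pmfOf p T t / Fintype.card β else 0)
          else 0 := by
        rw [Fintype.sum_prod_type, Finset.sum_comm]
        refine Finset.sum_congr rfl fun t _ => ?_
        by_cases hc : C t = c <;> simp [Prod.ext_iff, hc, h _ t]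
    _ = pmfOf p (fun ω => C (T ω)) c / Fintype.card β := by
        simp only [hfiber, pmfOf_comp_eq_sum p T C, Finset.sum_div, ite_div, zero_div]

lemma entH_pair_of_uniformIndep [Fintype γ] [Nonempty β] (h : UniformIndep p B S) :
    entH p (fun ω => (B ω, S ω)) = entH p S + Real.log (Fintype.card β) * ∑ ω, p ω := by
  have hcard : (Fintype.card β : ℝ) ≠ 0 := Nat.cast_ne_zero.mpr Fintype.card_ne_zero
  have hterm : ∀ b s, Real.negMulLog (pmfOf p (fun ω => (B ω, S ω)) (b, s))
      = Real.negMulLog (pmfOf p S s) / Fintype.card β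
        + pmfOf p S s * Real.log (Fintype.card β) / Fintype.card β := by
    intro b s
    rw [h b s, div_eq_mul_inv, Real.negMulLog_mul]
    simp only [Real.negMulLog, Real.log_inv]
    ring
  unfold entH
  rw [Fintype.sum_prod_type]
  simp only [hterm, Finset.sum_add_distrib, ← Finset.sum_div, ← Finset.sum_mul, sum_pmfOf,
    Finset.sum_const, Finset.card_univ, nsmul_eq_mul]
  field_simp

lemma condEntH_pair_of_uniformIndep {α : Type*} [Fintype α] [DecidableEq α] [Fintype γ]
    [Nonempty β] {A : Ω → α} (hS : UniformIndep p B S)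
    (hAS : UniformIndep p B (fun ω => (A ω, S ω))) :
    condEntH p A (fun ω => (B ω, S ω)) = condEntH p A S := by
  have hswap : entH p (fun ω => (A ω, B ω, S ω)) = entH p (fun ω => (B ω, A ω, S ω)) := by
    convert (entH_comp_equiv p ⟨fun x => (x.2.1, x.1, x.2.2), fun x => (x.2.1, x.1, x.2.2),
      fun _ => rfl, fun _ => rfl⟩ (fun ω => (A ω, B ω, S ω))).symm using 2
    rfl
  unfold condEntH
  rw [hswap, entH_pair_of_uniformIndep p hAS, entH_pair_of_uniformIndep p hS]
  ring

end UniformIndep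

lemma bijective_mul_sub_comp_perm {ι F : Type*} [Finite ι] [Ring F] [NoZeroDivisors F] [Finite F]
    (σ : Equiv.Perm ι) (z y : ι → F) (hz : ∀ i, z i ≠ 0) :
    Bijective fun r : ι → F => fun i => z (σ i) * (r (σ i) - y (σ i)) := by
  refine Finite.injective_iff_bijective.mp fun r r' h => funext fun j => ?_
  have hj := congrFun h (σ.symm j)
  simp only [Equiv.apply_symm_apply] at hj
  exact sub_left_inj.mp (mul_left_cancel₀ (hz j) hj)

theorem hamDist_share_independence_general {Ω F : Type*} [Fintype Ω] [Field F] [Fintype F]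
    [DecidableEq F] (n : ℕ) [DecidableEq (Equiv.Perm (Fin n))]
    (p : Ω → ℝ)
    (X Y R Z : Ω → (Fin n → F)) (Pm : Ω → Equiv.Perm (Fin n))
    (hRunif : ∀ r : Fin n → F, pmfOf p R r = 1 / (Fintype.card F : ℝ) ^ n)
    (hZunif : ∀ z : Fin n → F,
      pmfOf p Z z = if ∀ i, z i ≠ 0 then 1 / ((Fintype.card F : ℝ) - 1) ^ n else 0)
    (hindep : ∀ (r z : Fin n → F) (σ : Equiv.Perm (Fin n)) (x y : Fin n → F),
      pmfOf p (fun ω => (R ω, Z ω, Pm ω, X ω, Y ω)) (r, z, σ, x, y) =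
        pmfOf p R r * pmfOf p Z z * pmfOf p Pm σ *
          pmfOf p (fun ω => (X ω, Y ω)) (x, y)) :
    condEntH p (fun ω => (X ω, Y ω))
        (fun ω => ((fun i => Z ω (Pm ω i) * (R ω (Pm ω i) - Y ω (Pm ω i))),
                   (fun i => Z ω (Pm ω i) * (X ω (Pm ω i) - Y ω (Pm ω i))))) =
      condEntH p (fun ω => (X ω, Y ω))
        (fun ω => fun i => Z ω (Pm ω i) * (X ω (Pm ω i) - Y ω (Pm ω i))) := by
  set T : Ω → (Fin n → F) × Equiv.Perm (Fin n) × (Fin n → F) × (Fin n → F) :=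
    fun ω => (Z ω, Pm ω, X ω, Y ω)
  have hpair : ∀ r t, pmfOf p (fun ω => (R ω, T ω)) (r, t) =
      pmfOf p Z t.1 * pmfOf p Pm t.2.1 * pmfOf p (fun ω => (X ω, Y ω)) t.2.2
        / Fintype.card (Fin n → F) := by
    rintro r ⟨z, σ, x, y⟩
    rw [hindep, hRunif]
    simp only [one_div, Fintype.card_pi, Finset.prod_const, Finset.card_univ, Fintype.card_fin,
      Nat.cast_pow]
    ring
  have hRT : UniformIndep p R T := uniformIndep_of_pmfOf_pair_eq p _ hpair
  have hZ : ∀ t, pmfOf p T t ≠ 0 → ∀ i, t.1 i ≠ 0 := by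
    rintro ⟨z, σ, x, y⟩ ht
    by_contra hz
    rw [pmfOf_eq_of_pmfOf_pair_eq p _ hpair, hZunif, if_neg hz] at ht
    simp at ht
  have hbij : ∀ t, pmfOf p T t ≠ 0 →
      Bijective fun r : Fin n → F => fun i => t.1 (t.2.1 i) * (r (t.2.1 i) - t.2.2.2 (t.2.1 i)) :=
    fun t ht => bijective_mul_sub_comp_perm t.2.1 t.1 t.2.2.2 (hZ t ht)
  let S (t : (Fin n → F) × Equiv.Perm (Fin n) × (Fin n → F) × (Fin n → F)) : Fin n → F :=
    fun i => t.1 (t.2.1 i) * (t.2.2.1 (t.2.1 i) - t.2.2.2 (t.2.1 i))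
  exact condEntH_pair_of_uniformIndep p (hRT.comp_bijective p _ hbij S)
    (hRT.comp_bijective p _ hbij fun t => (t.2.2, S t))

/-- Share independence in `HamDist`: with `R^n` uniform on
`F^n`, `Z^n` uniform on `(F\{0})^n`, `π` uniform on permutations, and
`(R^n, Z^n, π)` jointly independent of `(X^n, Y^n)`, the share
`B^n = π(Z^n ⊗ (R^n ⊖ Y^n))` is conditionally independent of `(X^n, Y^n)`
given `S = A^n ⊕ B^n = π(Z^n ⊗ (X^n ⊖ Y^n))`; formally
`H(X^n, Y^n | B^n, S) = H(X^n, Y^n | S)`. -/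
theorem hamDist_share_independence {Ω F : Type*} [Fintype Ω] [Field F] [Fintype F]
    [DecidableEq F] (n : ℕ) [DecidableEq (Equiv.Perm (Fin n))]
    (p : Ω → ℝ) (hp0 : ∀ ω, 0 ≤ p ω) (hp1 : ∑ ω, p ω = 1)
    (X Y R Z : Ω → (Fin n → F)) (Pm : Ω → Equiv.Perm (Fin n))
    (hRunif : ∀ r : Fin n → F, pmfOf p R r = 1 / (Fintype.card F : ℝ) ^ n)
    (hZunif : ∀ z : Fin n → F,
      pmfOf p Z z = if ∀ i, z i ≠ 0 then 1 / ((Fintype.card F : ℝ) - 1) ^ n else 0)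
    (hPmunif : ∀ σ : Equiv.Perm (Fin n), pmfOf p Pm σ = 1 / (Nat.factorial n : ℝ))
    (hindep : ∀ (r z : Fin n → F) (σ : Equiv.Perm (Fin n)) (x y : Fin n → F),
      pmfOf p (fun ω => (R ω, Z ω, Pm ω, X ω, Y ω)) (r, z, σ, x, y) =
        pmfOf p R r * pmfOf p Z z * pmfOf p Pm σ *
          pmfOf p (fun ω => (X ω, Y ω)) (x, y)) :
    condEntH p (fun ω => (X ω, Y ω))
        (fun ω => ((fun i => Z ω (Pm ω i) * (R ω (Pm ω i) - Y ω (Pm ω i))),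
                   (fun i => Z ω (Pm ω i) * (X ω (Pm ω i) - Y ω (Pm ω i))))) =
      condEntH p (fun ω => (X ω, Y ω))
        (fun ω => fun i => Z ω (Pm ω i) * (X ω (Pm ω i) - Y ω (Pm ω i))) :=
  hamDist_share_independence_general n p X Y R Z Pm hRunif hZunif hindep
end
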